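/- Fix integers m, k ≥ 2 with m ≠ k, and let Ω₀⁰ be the spherical tetrahedron with vertices t_{−1/2}, t_{1/2}, t^{−1/2}, t^{1/2}. Then the stabilizer of Ω₀⁰ in O(4) is exactly the group {id, R_{Σ₀}, R_{Σ⁰}, R_{C₀⁰}} ≅ ℤ₂ × ℤ₂, where R_{Σ₀} is the reflection (x₁,x₂,x₃,x₄) ↦ (x₁,−x₂,x₃,x₄), R_{Σ⁰} is (x₁,x₂,x₃,x₄) ↦ (x₁,x₂,x₃,−x₄), and R_{C₀⁰} is (x₁,x₂,x₃,x₄) ↦ (x₁,−x₂,x₃,−x₄). -/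

import Mathlib

open Real

noncomputable section

abbrev E4 := EuclideanSpace ℝ (Fin 4)

def pt (a b c d : ℝ) : E4 := WithLp.toLp 2 ![a, b, c, d]

def tLow (m : ℕ) (i : ℝ) : E4 := pt (cos (i * π / m)) (sin (i * π / m)) 0 0

def tUp (k : ℕ) (j : ℝ) : E4 := pt 0 0 (cos (j * π / k)) (sin (j * π / k))

def vert (m k : ℕ) : Fin 4 → E4 :=
  ![tLow m (-(1/2)), tLow m (1/2), tUp k (-(1/2)), tUp k (1/2)]

/-- The spherical tetrahedron `Ω₀⁰`. -/
def Tet (m k : ℕ) : Set E4 :=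
  {u | ‖u‖ = 1 ∧ ∃ c : Fin 4 → ℝ, (∀ i, 0 ≤ c i) ∧
    ∃ r : ℝ, 0 < r ∧ r • u = ∑ i, c i • vert m k i}

/-- The reflection `R_{Σ₀} : (x₁,x₂,x₃,x₄) ↦ (x₁,−x₂,x₃,x₄)`. -/
def rSigLow (x : E4) : E4 := pt (x 0) (-(x 1)) (x 2) (x 3)

/-- The reflection `R_{Σ⁰} : (x₁,x₂,x₃,x₄) ↦ (x₁,x₂,x₃,−x₄)`. -/
def rSigUp (x : E4) : E4 := pt (x 0) (x 1) (x 2) (-(x 3))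

/-- The reflection `R_{C₀⁰} : (x₁,x₂,x₃,x₄) ↦ (x₁,−x₂,x₃,−x₄)`. -/
def rC (x : E4) : E4 := pt (x 0) (-(x 1)) (x 2) (-(x 3))

/-!
The four vertices of `Ω₀⁰` are linearly independent, so the cone over `Ω₀⁰` is simplicial and its
extreme rays are exactly the rays through the vertices. An isometry stabilising `Ω₀⁰` preserves
this cone, hence permutes the unit vertices, and the permutation `σ` preserves their Gram matrix
`!![1, A, 0, 0; A, 1, 0, 0; 0, 0, 1, B; 0, 0, B, 1]`, where `A = cos (π / m)`, `B = cos (π / k)`.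
Since `m ≠ k`, `A ≠ B` and at most one of them vanishes, so `σ` preserves the pair `{0, 1}` or
the pair `{2, 3}`, hence both: `σ` lies in the Klein four-group generated by the two
transpositions. An isometry is determined by its values on the vertices, so it is one of the
four reflections. Conversely each reflection permutes the vertices.
-/

open PointedCone

section SimplicialCone

variable {ι V : Type*} [Fintype ι] [AddCommGroup V] [Module ℝ V] {v : ι → V}

theorem PointedCone.mem_hull_range_iff {x : V} :
    x ∈ hull ℝ (Set.range v) ↔ ∃ c : ι → ℝ, (∀ i, 0 ≤ c i) ∧ ∑ i, c i • v i = x := by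
  rw [Submodule.mem_span_range_iff_exists_fun]
  constructor
  · rintro ⟨c, rfl⟩
    exact ⟨fun i => c i, fun i => (c i).2, rfl⟩
  · rintro ⟨c, hc, rfl⟩
    exact ⟨fun i => ⟨c i, hc i⟩, rfl⟩

theorem LinearIndependent.exists_nonneg_smul_of_add_eq (hv : LinearIndependent ℝ v) {y z : V}
    (hy : y ∈ hull ℝ (Set.range v)) (hz : z ∈ hull ℝ (Set.range v)) {j : ι}
    (hyz : y + z = v j) : ∃ t : ℝ, 0 ≤ t ∧ y = t • v j := by
  classical
  obtain ⟨b, hb, rfl⟩ := mem_hull_range_iff.1 hy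
  obtain ⟨b', hb', rfl⟩ := mem_hull_range_iff.1 hz
  have hcoeff := Fintype.linearIndependent_iff.1 hv
    (fun i => b i + b' i - (Pi.single j 1 : ι → ℝ) i)
    (by simp [sub_smul, add_smul, Finset.sum_add_distrib, hyz, Pi.single_apply, ite_smul])
  refine ⟨b j, hb j, Finset.sum_eq_single j (fun i _ hij => ?_) (by simp)⟩
  have hi := hcoeff i
  rw [Pi.single_eq_of_ne hij, sub_zero] at hi
  rw [le_antisymm (by linarith [hb' i]) (hb i), zero_smul]

theorem LinearIndependent.exists_apply_eq_smul (hv : LinearIndependent ℝ v) (f : V ≃ₗ[ℝ] V)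
    (hf : ∀ x ∈ hull ℝ (Set.range v), f x ∈ hull ℝ (Set.range v))
    (hf' : ∀ x ∈ hull ℝ (Set.range v), f.symm x ∈ hull ℝ (Set.range v)) (j : ι) :
    ∃ p, ∃ c : ℝ, 0 < c ∧ f (v j) = c • v p := by
  classical
  obtain ⟨a, ha, hfa⟩ := mem_hull_range_iff.1 (hf _ (subset_hull ⟨j, rfl⟩))
  obtain ⟨p, hp⟩ : ∃ p, a p ≠ 0 := by
    by_contra! h
    simp only [h, zero_smul, Finset.sum_const_zero] at hfa
    exact hv.ne_zero j (f.injective (by rw [← hfa, map_zero]))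
  have hap : 0 < a p := (ha p).lt_of_ne' hp
  -- Split `f (v j)` into its `v p`-part and the rest: pulled back by `f`, both lie on the ray
  -- through `v j`, so `f (v j)` lies on the ray through `v p`.
  rw [← Finset.add_sum_erase _ _ (Finset.mem_univ p)] at hfa
  obtain ⟨t, ht, hty⟩ := hv.exists_nonneg_smul_of_add_eq
    (hf' _ (smul_mem _ hap.le (subset_hull ⟨p, rfl⟩)))
    (hf' _ (Submodule.sum_mem _ fun i _ => smul_mem _ (ha i) (subset_hull ⟨i, rfl⟩)))
    (by rw [← map_add, hfa, f.symm_apply_apply])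
  have hfy : a p • v p = t • f (v j) := by
    rw [← f.apply_symm_apply (a p • v p), hty, map_smul]
  have ht0 : t ≠ 0 := by
    rintro rfl
    rw [zero_smul, smul_eq_zero] at hfy
    exact hfy.elim hp (hv.ne_zero p)
  refine ⟨p, a p / t, div_pos hap (ht.lt_of_ne' ht0), ?_⟩
  rw [div_eq_inv_mul, mul_smul, hfy, smul_smul, inv_mul_cancel₀ ht0, one_smul]

end SimplicialCone

theorem PointedCone.apply_mem_of_forall_norm_eq_one {V W : Type*} [NormedAddCommGroup V]
    [NormedSpace ℝ V] [AddCommGroup W] [Module ℝ W] {C : PointedCone ℝ V} {D : PointedCone ℝ W}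
    (f : V →ₗ[ℝ] W) (h : ∀ u ∈ C, ‖u‖ = 1 → f u ∈ D) {x : V} (hx : x ∈ C) : f x ∈ D := by
  rcases eq_or_ne x 0 with rfl | hx0
  · simp
  have hn : 0 < ‖x‖ := norm_pos_iff.2 hx0
  have hu := h (‖x‖⁻¹ • x) (C.smul_mem (by positivity) hx) (by
    rw [norm_smul, norm_inv, norm_norm, inv_mul_cancel₀ hn.ne'])
  rw [map_smul] at hu
  simpa [smul_smul, mul_inv_cancel₀ hn.ne'] using D.smul_mem hn.le hu

theorem cos_pi_div_natCast_injective : Function.Injective fun n : ℕ => cos (π / n) := by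
  intro a b h
  have hmem : ∀ n : ℕ, π / n ∈ Set.Icc 0 π := fun n => by
    rcases n.eq_zero_or_pos with rfl | hn
    · simp [pi_pos.le]
    · exact ⟨by positivity, div_le_self pi_pos.le (by exact_mod_cast hn)⟩
  have hab := injOn_cos (hmem a) (hmem b) h
  rcases a.eq_zero_or_pos with rfl | ha <;> rcases b.eq_zero_or_pos with rfl | hb
  · rfl
  · rw [Nat.cast_zero, div_zero] at hab
    exact absurd hab.symm (div_pos pi_pos (Nat.cast_pos.2 hb)).ne'
  · rw [Nat.cast_zero, div_zero] at hab
    exact absurd hab (div_pos pi_pos (Nat.cast_pos.2 ha)).ne'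
  · rw [div_eq_div_iff (by positivity) (by positivity)] at hab
    exact_mod_cast (mul_left_cancel₀ pi_ne_zero hab).symm

theorem cos_pi_div_natCast_eq_zero_iff {n : ℕ} : cos (π / n) = 0 ↔ n = 2 := by
  refine ⟨fun h => cos_pi_div_natCast_injective ?_, fun h => by simp [h]⟩
  simp [h]

-- `π / 0 = 0`, so `n = 0` is the case `cos 0 = 1`.
theorem cos_pi_div_sq_ne_one {n : ℕ} (hn : 2 ≤ n) : cos (π / n) ^ 2 ≠ 1 := by
  rw [Ne, sq_eq_one_iff]
  rintro (h | h)
  · have := @cos_pi_div_natCast_injective n 0 (by simpa using h)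
    omega
  · have := @cos_pi_div_natCast_injective n 1 (by simpa using h)
    omega

theorem cos_pi_div_ne_one {n : ℕ} (hn : 2 ≤ n) : cos (π / n) ≠ 1 :=
  fun h => cos_pi_div_sq_ne_one hn (by rw [h, one_pow])

def blockGram (A B : ℝ) : Matrix (Fin 4) (Fin 4) ℝ :=
  !![1, A, 0, 0; A, 1, 0, 0; 0, 0, 1, B; 0, 0, B, 1]

theorem det_blockGram (A B : ℝ) : (blockGram A B).det = (1 - A ^ 2) * (1 - B ^ 2) := by
  simp [blockGram, Matrix.det_succ_row_zero, Fin.sum_univ_succ, Fin.succAbove]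
  ring

theorem Equiv.Perm.klein_of_preserves_pair (σ : Equiv.Perm (Fin 4))
    (h : (σ 0 = 0 ∧ σ 1 = 1 ∨ σ 0 = 1 ∧ σ 1 = 0) ∨ (σ 2 = 2 ∧ σ 3 = 3 ∨ σ 2 = 3 ∧ σ 3 = 2)) :
    σ = 1 ∨ σ = swap 0 1 ∨ σ = swap 2 3 ∨ σ = swap 0 1 * swap 2 3 := by
  revert σ
  decide

theorem perm_eq_of_blockGram_apply {A B : ℝ} (hA : A ≠ 1) (hB : B ≠ 1) (hAB : A ≠ B)
    (hAB0 : A ≠ 0 ∨ B ≠ 0) {σ : Equiv.Perm (Fin 4)}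
    (hσ : ∀ p q, blockGram A B (σ p) (σ q) = blockGram A B p q) :
    σ = 1 ∨ σ = .swap 0 1 ∨ σ = .swap 2 3 ∨ σ = .swap 0 1 * .swap 2 3 := by
  refine σ.klein_of_preserves_pair ?_
  rcases hAB0 with hA0 | hB0
  · left
    have h01 := hσ 0 1
    generalize σ 0 = p, σ 1 = q at h01
    fin_cases p <;> fin_cases q <;>
      first | decide | simp [blockGram, hA.symm, hA0.symm, hAB.symm] at h01
  · right
    have h23 := hσ 2 3
    generalize σ 2 = p, σ 3 = q at h23
    fin_cases p <;> fin_cases q <;>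
      first | decide | simp [blockGram, hB.symm, hB0.symm, hAB] at h23

theorem perm_eq_of_blockGram_cos_apply {m k : ℕ} (hm : 2 ≤ m) (hk : 2 ≤ k) (hmk : m ≠ k)
    {σ : Equiv.Perm (Fin 4)} (hσ : ∀ p q, blockGram (cos (π / m)) (cos (π / k)) (σ p) (σ q) =
      blockGram (cos (π / m)) (cos (π / k)) p q) :
    σ = 1 ∨ σ = .swap 0 1 ∨ σ = .swap 2 3 ∨ σ = .swap 0 1 * .swap 2 3 := by
  refine perm_eq_of_blockGram_apply (cos_pi_div_ne_one hm) (cos_pi_div_ne_one hk)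
    (cos_pi_div_natCast_injective.ne hmk) ?_ hσ
  rw [Ne, Ne, cos_pi_div_natCast_eq_zero_iff, cos_pi_div_natCast_eq_zero_iff]
  omega

theorem inner_pt (a b c d a' b' c' d' : ℝ) :
    inner ℝ (pt a b c d) (pt a' b' c' d') = a * a' + b * b' + c * c' + d * d' := by
  simp [pt, PiLp.inner_apply, Fin.sum_univ_four]
  ring

theorem gram_vert (m k : ℕ) :
    Matrix.gram ℝ (vert m k) = blockGram (cos (π / m)) (cos (π / k)) := by
  ext p q
  fin_cases p <;> fin_cases q <;>
    simp [Matrix.gram_apply, blockGram, vert, tLow, tUp, inner_pt, ← cos_sub,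
      -inner_self_eq_norm_sq_to_K] <;>
    ring_nf <;> simp

theorem norm_vert (m k : ℕ) (p : Fin 4) : ‖vert m k p‖ = 1 := by
  have h := congr_fun₂ (gram_vert m k) p p
  rw [Matrix.gram_apply, real_inner_self_eq_norm_sq] at h
  rw [← pow_left_inj₀ (norm_nonneg _) zero_le_one two_ne_zero]
  fin_cases p <;> simpa [blockGram] using h

theorem linearIndependent_vert {m k : ℕ} (hm : 2 ≤ m) (hk : 2 ≤ k) :
    LinearIndependent ℝ (vert m k) := by
  refine Matrix.linearIndependent_of_det_gram_ne_zero ?_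
  rw [gram_vert, det_blockGram]
  exact mul_ne_zero (sub_ne_zero.2 (cos_pi_div_sq_ne_one hm).symm)
    (sub_ne_zero.2 (cos_pi_div_sq_ne_one hk).symm)

def tetCone (m k : ℕ) : PointedCone ℝ E4 := hull ℝ (Set.range (vert m k))

theorem mem_Tet_iff {m k : ℕ} {u : E4} : u ∈ Tet m k ↔ ‖u‖ = 1 ∧ u ∈ tetCone m k := by
  rw [tetCone, mem_hull_range_iff]
  refine and_congr_right fun _ =>
    ⟨?_, fun ⟨c, hc, hu⟩ => ⟨c, hc, 1, one_pos, by rw [one_smul, hu]⟩⟩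
  rintro ⟨c, hc, r, hr, hru⟩
  refine ⟨fun i => r⁻¹ * c i, fun i => mul_nonneg (inv_nonneg.2 hr.le) (hc i), ?_⟩
  simp_rw [mul_smul, ← Finset.smul_sum, ← hru, smul_smul, inv_mul_cancel₀ hr.ne', one_smul]

theorem Tet_eq_sphere_inter (m k : ℕ) : Tet m k = Metric.sphere 0 1 ∩ tetCone m k := by
  ext
  simp [mem_Tet_iff]

section Stabilizer

variable {m k : ℕ} {g : E4 ≃ₗᵢ[ℝ] E4}

theorem image_Tet_symm (hg : g '' Tet m k = Tet m k) : g.symm '' Tet m k = Tet m k := by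
  rw [g.symm.image_eq_preimage_symm, LinearIsometryEquiv.symm_symm]
  conv_lhs => rw [← hg]
  exact g.injective.preimage_image _

theorem apply_mem_tetCone (hg : g '' Tet m k = Tet m k) {x : E4} (hx : x ∈ tetCone m k) :
    g x ∈ tetCone m k :=
  apply_mem_of_forall_norm_eq_one g.toLinearEquiv.toLinearMap
    (fun _ hu hu1 => (mem_Tet_iff.1 (hg ▸ Set.mem_image_of_mem g (mem_Tet_iff.2 ⟨hu1, hu⟩))).2) hx

theorem exists_perm_apply_vert (hm : 2 ≤ m) (hk : 2 ≤ k) (hg : g '' Tet m k = Tet m k) :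
    ∃ σ : Equiv.Perm (Fin 4), ∀ p, g (vert m k p) = vert m k (σ p) := by
  have hv := linearIndependent_vert hm hk
  have hvert : ∀ j, ∃ p, g (vert m k j) = vert m k p := fun j => by
    obtain ⟨p, c, hc, hcp⟩ := hv.exists_apply_eq_smul g.toLinearEquiv
      (fun _ => apply_mem_tetCone hg) (fun _ => apply_mem_tetCone (image_Tet_symm hg)) j
    rw [LinearIsometryEquiv.coe_toLinearEquiv] at hcp
    have hc1 := congrArg norm hcp
    rw [g.norm_map, norm_smul, norm_vert, norm_vert, Real.norm_of_nonneg hc.le, mul_one] at hc1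
    exact ⟨p, by rw [hcp, ← hc1, one_smul]⟩
  choose σ hσ using hvert
  have hinj : Function.Injective σ := fun p q hpq =>
    g.injective.comp hv.injective (by simp only [Function.comp_apply, hσ, hpq])
  exact ⟨Equiv.ofBijective σ hinj.bijective_of_finite, hσ⟩

theorem blockGram_apply_perm {σ : Equiv.Perm (Fin 4)} (hσ : ∀ p, g (vert m k p) = vert m k (σ p))
    (p q : Fin 4) : blockGram (cos (π / m)) (cos (π / k)) (σ p) (σ q) =
      blockGram (cos (π / m)) (cos (π / k)) p q := by
  simp only [← gram_vert, Matrix.gram_apply, ← hσ, g.inner_map_map]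

theorem coe_eq_of_apply_vert (hm : 2 ≤ m) (hk : 2 ≤ k) {f : E4 → E4} {L : E4 →ₗ[ℝ] E4}
    (hfL : f = L) {τ : Equiv.Perm (Fin 4)} (hg : ∀ p, g (vert m k p) = vert m k (τ p))
    (hf : ∀ p, f (vert m k p) = vert m k (τ p)) : ⇑g = f := by
  subst hfL
  have hspan := (linearIndependent_vert hm hk).span_eq_top_of_card_eq_finrank' (by simp)
  exact congrArg DFunLike.coe <| LinearMap.ext_on_range hspan
    (f := g.toLinearEquiv.toLinearMap) fun p => (hg p).trans (hf p).symm

theorem image_Tet_of_apply_vert (τ : Equiv.Perm (Fin 4))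
    (hτ : ∀ p, g (vert m k p) = vert m k (τ p)) : g '' Tet m k = Tet m k := by
  have hcone : g '' (tetCone m k : Set E4) = tetCone m k := by
    change g.toLinearEquiv.toLinearMap '' _ = _
    rw [← PointedCone.coe_map, tetCone, PointedCone.map, Submodule.map_span, ← Set.range_comp]
    congr 2
    rw [← EquivLike.range_comp (vert m k) τ]
    exact congrArg Set.range (funext hτ)
  rw [Tet_eq_sphere_inter, Set.image_inter g.injective, hcone, g.image_sphere, map_zero]

end Stabilizer

theorem rSigLow_eq : rSigLow = ⇑(Matrix.toLpLin 2 2 (Matrix.diagonal ![1, -1, 1, 1])) := by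
  ext x i
  fin_cases i <;> simp [rSigLow, pt, Matrix.toLpLin_apply, Matrix.mulVec_diagonal]

theorem rSigUp_eq : rSigUp = ⇑(Matrix.toLpLin 2 2 (Matrix.diagonal ![1, 1, 1, -1])) := by
  ext x i
  fin_cases i <;> simp [rSigUp, pt, Matrix.toLpLin_apply, Matrix.mulVec_diagonal]

theorem rC_eq : rC = ⇑(Matrix.toLpLin 2 2 (Matrix.diagonal ![1, -1, 1, -1])) := by
  ext x i
  fin_cases i <;> simp [rC, pt, Matrix.toLpLin_apply, Matrix.mulVec_diagonal]

theorem rSigLow_vert (m k : ℕ) (p : Fin 4) :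
    rSigLow (vert m k p) = vert m k (Equiv.swap 0 1 p) := by
  fin_cases p <;> ext i <;> fin_cases i <;>
    simp [rSigLow, vert, tLow, tUp, pt, Equiv.swap_apply_of_ne_of_ne, neg_div]

theorem rSigUp_vert (m k : ℕ) (p : Fin 4) :
    rSigUp (vert m k p) = vert m k (Equiv.swap 2 3 p) := by
  fin_cases p <;> ext i <;> fin_cases i <;>
    simp [rSigUp, vert, tLow, tUp, pt, Equiv.swap_apply_of_ne_of_ne, neg_div]

theorem rC_vert (m k : ℕ) (p : Fin 4) :
    rC (vert m k p) = vert m k ((Equiv.swap 0 1 * Equiv.swap 2 3 : Equiv.Perm (Fin 4)) p) := by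
  fin_cases p <;> ext i <;> fin_cases i <;>
    simp [rC, vert, tLow, tUp, pt, Equiv.swap_apply_of_ne_of_ne, neg_div]

/-- For `m ≠ k` the stabilizer of `Ω₀⁰` in `O(4)` (the group of linear isometries of `ℝ⁴`)
is exactly `{id, R_{Σ₀}, R_{Σ⁰}, R_{C₀⁰}} ≅ ℤ₂ × ℤ₂`. -/
theorem statement10 (m k : ℕ) (hm : 2 ≤ m) (hk : 2 ≤ k) (hmk : m ≠ k)
    (g : E4 ≃ₗᵢ[ℝ] E4) :
    g '' Tet m k = Tet m k ↔
      (⇑g = id ∨ ⇑g = rSigLow ∨ ⇑g = rSigUp ∨ ⇑g = rC) := by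
  constructor
  · intro hg
    obtain ⟨σ, hσ⟩ := exists_perm_apply_vert hm hk hg
    rcases perm_eq_of_blockGram_cos_apply hm hk hmk (blockGram_apply_perm hσ)
      with rfl | rfl | rfl | rfl
    · exact .inl (coe_eq_of_apply_vert hm hk (L := .id) rfl hσ fun _ => rfl)
    · exact .inr (.inl (coe_eq_of_apply_vert hm hk rSigLow_eq hσ (rSigLow_vert m k)))
    · exact .inr (.inr (.inl (coe_eq_of_apply_vert hm hk rSigUp_eq hσ (rSigUp_vert m k))))
    · exact .inr (.inr (.inr (coe_eq_of_apply_vert hm hk rC_eq hσ (rC_vert m k))))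
  · rintro (h | h | h | h)
    · exact image_Tet_of_apply_vert 1 fun p => by rw [h]; rfl
    · exact image_Tet_of_apply_vert _ fun p => by rw [h, rSigLow_vert]
    · exact image_Tet_of_apply_vert _ fun p => by rw [h, rSigUp_vert]
    · exact image_Tet_of_apply_vert _ fun p => by rw [h, rC_vert]

end
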